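/- arXiv:0801.3306 — 2 statements merged into one kernel-verified Lean document; each statement's English description precedes it below -/
import Mathlib

section
/- Let G be a strongly connected digraph with a fixed cyclic ordering of the outgoing edges at each vertex. A single-chip-and-rotor state (w, ρ) on G is recurrent under the rotor-router operation if and only if it is a unicycle. -/
/-!
On a strongly connected digraph, a single-chip-and-rotor state is recurrent under the
rotor-router operation if and only if it is a unicycle (Holroyd et al., Theorem 3.8).
-/

/-- Rotor configurations: an outgoing edge at each vertex. -/
abbrev RotorConfig {V E : Type} (tail : E → V) : Type :=
  {ρ : V → E // ∀ v, tail (ρ v) = v}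

/-- The rotor-router operation on single-chip-and-rotor states `(w, ρ)`. -/
def rotorStep {V E : Type} [DecidableEq V] (tail head : E → V) (next : E → E)
    (hnext : ∀ e, tail (next e) = tail e)
    (p : V × RotorConfig tail) : V × RotorConfig tail :=
  (head (next (p.2.1 p.1)),
   ⟨Function.update p.2.1 p.1 (next (p.2.1 p.1)), by
      intro u
      rcases eq_or_ne u p.1 with h | h
      · subst h
        rw [Function.update_self, hnext]
        exact p.2.2 p.1
      · rw [Function.update_of_ne h]
        exact p.2.2 u⟩)

/-- The vertex-successor map of a rotor configuration. -/
def succMap {V E : Type} (tail : E → V) (head : E → V) (ρ : RotorConfig tail) : V → V :=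
  fun v => head (ρ.1 v)

/-- `(w, ρ)` is a unicycle: the set of rotor edges `{ρ(v)}` contains a unique directed
cycle and `w` lies on this cycle. -/
def Unicycle {V E : Type} (tail head : E → V) (p : V × RotorConfig tail) : Prop :=
  (∃ k, 0 < k ∧ (succMap tail head p.2)^[k] p.1 = p.1) ∧
  ∀ v : V, (∃ k, 0 < k ∧ (succMap tail head p.2)^[k] v = v) →
    ∃ j, (succMap tail head p.2)^[j] p.1 = v

/-- A state is recurrent when iterating the rotor-router operation eventually leads
back to it. -/
def RecurrentState {V E : Type} [DecidableEq V] (tail head : E → V) (next : E → E)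
    (hnext : ∀ e, tail (next e) = tail e) (p : V × RotorConfig tail) : Prop :=
  ∃ n, 0 < n ∧ (rotorStep tail head next hnext)^[n] p = p

/-!
A unicycle with chip at `w` is the same as a rotor configuration in which every vertex reaches
`w` by following rotors. One rotor-router step keeps this property (only the rotor at `w`
changes) and is injective on unicycles, so on the finite set of unicycles it is a permutation
and every unicycle is recurrent. Conversely, along a recurrent orbit the chip visits every
vertex (the rotors at a visited vertex run through all its out-edges); at the end of a period
each rotor points along the edge by which the chip last left its vertex, and these last-exit
times strictly increase along the rotors until the chip's position is reached.
-/

open Function Set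

section FunctionalGraph

variable {α : Type*} {σ σ' : α → α} {w : α}

theorem exists_iterate_eq_of_mem_periodicPts {x y : α} (hx : x ∈ periodicPts σ) {j : ℕ}
    (hy : σ^[j] x = y) : ∃ i, σ^[i] y = x := by
  obtain ⟨k, hk, hper⟩ := hx
  refine ⟨k * j - j, ?_⟩
  rw [← hy, ← iterate_add_apply, Nat.sub_add_cancel (Nat.le_mul_of_pos_left j hk)]
  exact (hper.mul_const j).eq

theorem exists_iterate_mem_periodicPts [Finite α] (σ : α → α) (x : α) :
    ∃ m, σ^[m] x ∈ periodicPts σ := by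
  obtain ⟨a, b, hab, h⟩ := Finite.exists_lt_map_eq_of_forall_mem (f := (σ^[·] x))
    (fun _ => mem_univ _) finite_univ
  refine ⟨a, mk_mem_periodicPts (Nat.sub_pos_of_lt hab) ?_⟩
  change σ^[b - a] (σ^[a] x) = σ^[a] x
  rw [← iterate_add_apply, Nat.sub_add_cancel hab.le]
  exact h.symm

theorem mem_periodicPts_of_forall_exists_iterate_eq (h : ∀ v, ∃ j, σ^[j] v = w) :
    w ∈ periodicPts σ :=
  let ⟨j, hj⟩ := h (σ w)
  mk_mem_periodicPts j.succ_pos hj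

theorem mem_periodicPts_and_forall_iff_forall_exists_iterate_eq [Finite α] :
    (w ∈ periodicPts σ ∧ ∀ v ∈ periodicPts σ, ∃ j, σ^[j] w = v) ↔
      ∀ v, ∃ j, σ^[j] v = w := by
  constructor
  · rintro ⟨hw, hcycle⟩ v
    obtain ⟨m, hm⟩ := exists_iterate_mem_periodicPts σ v
    obtain ⟨j, hj⟩ := hcycle _ hm
    obtain ⟨i, hi⟩ := exists_iterate_eq_of_mem_periodicPts hw hj
    exact ⟨i + m, by rw [iterate_add_apply, hi]⟩
  · intro h
    refine ⟨mem_periodicPts_of_forall_exists_iterate_eq h, fun v hv => ?_⟩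
    obtain ⟨j, hj⟩ := h v
    exact exists_iterate_eq_of_mem_periodicPts hv hj

theorem forall_exists_iterate_eq_of_forall_ne (h : ∀ v, ∃ j, σ^[j] v = w)
    (hσ : ∀ v, v ≠ w → σ' v = σ v) : ∀ v, ∃ j, σ'^[j] v = w := by
  suffices ∀ j v, σ^[j] v = w → ∃ i, σ'^[i] v = w from fun v => (h v).elim (this · v)
  intro j
  induction j with
  | zero => exact fun v hv => ⟨0, hv⟩
  | succ j ih =>
    intro v hv
    by_cases hvw : v = w
    · exact ⟨0, hvw⟩
    · obtain ⟨i, hi⟩ := ih (σ v) hv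
      exact ⟨i + 1, by rwa [iterate_succ_apply, hσ v hvw]⟩

theorem forall_exists_iterate_eq_of_lt_potential (τ : α → ℕ) {N : ℕ} (hτN : ∀ v, τ v < N)
    (hτ : ∀ v, σ v ≠ w → τ v < τ (σ v)) : ∀ v, ∃ j, σ^[j] v = w := by
  suffices ∀ d v, N - τ v ≤ d → ∃ j, σ^[j] v = w from fun v => this _ v le_rfl
  intro d
  induction d with
  | zero => intro v hv; have := hτN v; omega
  | succ d ih =>
    intro v hv
    by_cases hσv : σ v = w
    · exact ⟨1, hσv⟩
    · obtain ⟨j, hj⟩ := ih (σ v) (by have := hτ v hσv; have := hτN (σ v); omega)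
      exact ⟨j + 1, hj⟩

theorem Set.InjOn.mem_periodicPts [Finite α] {f : α → α} {s : Set α} (hinj : InjOn f s)
    (hf : MapsTo f s s) {x : α} (hx : x ∈ s) : x ∈ periodicPts f :=
  Semiconj.mapsTo_periodicPts (fun _ => rfl : Semiconj Subtype.val (hf.restrict f s s) f)
    ((hf.restrict_inj.2 hinj).mem_periodicPts ⟨x, hx⟩)

end FunctionalGraph

section Rotor

variable {V E : Type} {tail head : E → V} {next : E → E}

theorem next_injective (hnext : ∀ e, tail (next e) = tail e)
    (hcyc : ∀ e e' : E, tail e = tail e' → ∃ k, next^[k] e = e') : Injective next := by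
  have hper : ∀ e, e ∈ periodicPts next := fun e =>
    let ⟨k, hk⟩ := hcyc (next e) e (hnext e)
    mk_mem_periodicPts k.succ_pos hk
  exact fun a b hab => (bijOn_periodicPts next).injOn (hper a) (hper b) hab

theorem unicycle_iff [Finite V] {p : V × RotorConfig tail} :
    Unicycle tail head p ↔ ∀ v, ∃ j, (succMap tail head p.2)^[j] v = p.1 :=
  mem_periodicPts_and_forall_iff_forall_exists_iterate_eq

variable [DecidableEq V] {hnext : ∀ e, tail (next e) = tail e}

local notation "step" => rotorStep tail head next hnext

theorem rotorStep_snd_of_ne (p : V × RotorConfig tail) {v : V} (hv : v ≠ p.1) :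
    (step p).2.1 v = p.2.1 v :=
  update_of_ne hv _ _

theorem rotorStep_snd_self (p : V × RotorConfig tail) : (step p).2.1 p.1 = next (p.2.1 p.1) :=
  update_self _ _ _

theorem succMap_rotorStep_of_ne (p : V × RotorConfig tail) {v : V} (hv : v ≠ p.1) :
    succMap tail head (step p).2 v = succMap tail head p.2 v :=
  congrArg head (rotorStep_snd_of_ne p hv)

theorem succMap_rotorStep_self (p : V × RotorConfig tail) :
    succMap tail head (step p).2 p.1 = (step p).1 :=
  congrArg head (rotorStep_snd_self p)

theorem forall_exists_iterate_succMap_rotorStep [Finite V] {p : V × RotorConfig tail}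
    (hp : Unicycle tail head p) : ∀ v, ∃ j, (succMap tail head (step p).2)^[j] v = p.1 :=
  forall_exists_iterate_eq_of_forall_ne (unicycle_iff.1 hp) fun _ hv =>
    succMap_rotorStep_of_ne p hv

theorem Unicycle.rotorStep [Finite V] {p : V × RotorConfig tail} (hp : Unicycle tail head p) :
    Unicycle tail head (step p) := by
  refine unicycle_iff.2 fun v => ?_
  obtain ⟨j, hj⟩ := forall_exists_iterate_succMap_rotorStep hp v
  exact ⟨j + 1, by rw [iterate_succ_apply', hj, succMap_rotorStep_self]⟩

/-- The chip position is recovered as the unique periodic point mapped to the new chip position,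
and the rotor there is recovered by injectivity of `next`. -/
theorem injOn_rotorStep [Finite V] (hinj : Injective next) :
    InjOn step {p | Unicycle tail head p} := by
  rintro ⟨w, ρ⟩ hp ⟨w', ρ'⟩ hp' hstep
  have hper : ∀ {q : V × RotorConfig tail}, Unicycle tail head q → step q = step ⟨w, ρ⟩ →
      q.1 ∈ periodicPts (succMap tail head (step ⟨w, ρ⟩).2) := fun hq h =>
    mem_periodicPts_of_forall_exists_iterate_eq (h ▸ forall_exists_iterate_succMap_rotorStep hq)
  have hw : w = w' := (bijOn_periodicPts _).injOn (hper hp rfl) (hper hp' hstep.symm) <| by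
    rw [succMap_rotorStep_self, hstep]
    exact (succMap_rotorStep_self _).symm
  subst hw
  have hρ : ∀ v, (step ⟨w, ρ⟩).2.1 v = (step ⟨w, ρ'⟩).2.1 v := fun v => by rw [hstep]
  refine Prod.ext rfl (Subtype.ext (funext fun v => ?_))
  rcases eq_or_ne v w with rfl | hv
  · exact hinj ((rotorStep_snd_self _).symm.trans ((hρ v).trans (rotorStep_snd_self _)))
  · exact (rotorStep_snd_of_ne (v := v) (w, ρ) hv).symm.trans
      ((hρ v).trans (rotorStep_snd_of_ne (w, ρ') hv))

section Orbit

variable (p : V × RotorConfig tail)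

theorem rotorStep_iterate_snd_of_forall_ne {u : V} {a : ℕ} :
    ∀ {d : ℕ}, (∀ j, a ≤ j → j < a + d → (step^[j] p).1 ≠ u) →
      (step^[a + d] p).2.1 u = (step^[a] p).2.1 u
  | 0, _ => rfl
  | d + 1, h => by
    rw [← add_assoc, iterate_succ_apply',
      rotorStep_snd_of_ne _ (h (a + d) (by omega) (by omega)).symm,
      rotorStep_iterate_snd_of_forall_ne fun j h₁ h₂ => h j h₁ (by omega)]

theorem exists_visit_rotor_eq {u : V} {d : ℕ} :
    ∀ {a : ℕ}, (step^[a + d] p).1 = u →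
      ∃ j ≥ a, (step^[j] p).1 = u ∧ (step^[j] p).2.1 u = (step^[a] p).2.1 u := by
  induction d with
  | zero => exact fun h => ⟨_, le_rfl, h, rfl⟩
  | succ d ih =>
    intro a h
    by_cases ha : (step^[a] p).1 = u
    · exact ⟨a, le_rfl, ha, rfl⟩
    · obtain ⟨j, hj, hju, hjr⟩ := ih (a := a + 1) (by rwa [add_right_comm])
      refine ⟨j, by omega, hju, ?_⟩
      rw [hjr, iterate_succ_apply', rotorStep_snd_of_ne _ (Ne.symm ha)]

variable {p}

theorem exists_visit_rotor_eq_next (hp : p ∈ periodicPts step) {m : ℕ} {u : V}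
    (hm : (step^[m] p).1 = u) :
    ∃ m', (step^[m'] p).1 = u ∧ (step^[m'] p).2.1 u = next ((step^[m] p).2.1 u) := by
  subst hm
  obtain ⟨n, hn, hpn⟩ := hp
  have hreturn : (step^[(m + 1) + (n - 1)] p).1 = (step^[m] p).1 := by
    rw [show m + 1 + (n - 1) = m + n by omega, iterate_add_apply, hpn.eq]
  obtain ⟨j, -, hju, hjr⟩ := exists_visit_rotor_eq p hreturn
  exact ⟨j, hju, by rw [hjr, iterate_succ_apply', rotorStep_snd_self]⟩

theorem exists_visit_rotor_eq_iterate_next (hp : p ∈ periodicPts step) {m : ℕ} {u : V}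
    (hm : (step^[m] p).1 = u) (k : ℕ) :
    ∃ m', (step^[m'] p).1 = u ∧ (step^[m'] p).2.1 u = next^[k] ((step^[m] p).2.1 u) := by
  induction k with
  | zero => exact ⟨m, hm, rfl⟩
  | succ k ih =>
    obtain ⟨m', hm', hr⟩ := ih
    obtain ⟨m'', hm'', hr'⟩ := exists_visit_rotor_eq_next hp hm'
    exact ⟨m'', hm'', by rw [hr', hr, iterate_succ_apply']⟩

theorem exists_visit_head (hcyc : ∀ e e' : E, tail e = tail e' → ∃ k, next^[k] e = e')
    (hp : p ∈ periodicPts step) {m : ℕ} {e : E} (hm : (step^[m] p).1 = tail e) :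
    ∃ m', (step^[m'] p).1 = head e := by
  obtain ⟨k, hk⟩ := hcyc (next ((step^[m] p).2.1 (tail e))) e (by rw [hnext, (step^[m] p).2.2])
  obtain ⟨m', hm', hr⟩ := exists_visit_rotor_eq_iterate_next hp hm k
  refine ⟨m' + 1, ?_⟩
  rw [iterate_succ_apply', ← succMap_rotorStep_self, succMap, rotorStep_snd_self, hm', hr,
    ← iterate_succ_apply' next, iterate_succ_apply, hk]

theorem exists_visit_of_reflTransGen
    (hcyc : ∀ e e' : E, tail e = tail e' → ∃ k, next^[k] e = e')
    (hp : p ∈ periodicPts step) {v : V}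
    (hv : Relation.ReflTransGen (fun a b => ∃ e, tail e = a ∧ head e = b) p.1 v) :
    ∃ m, (step^[m] p).1 = v := by
  induction hv with
  | refl => exact ⟨0, rfl⟩
  | tail _ hedge ih =>
    obtain ⟨e, rfl, rfl⟩ := hedge
    obtain ⟨m, hm⟩ := ih
    exact exists_visit_head hcyc hp hm

theorem unicycle_iterate_of_forall_visit [Finite V] {m : ℕ}
    (hvisit : ∀ v, ∃ i < m, (step^[i] p).1 = v) : Unicycle tail head (step^[m] p) := by
  classical
  let τ (v : V) : ℕ := Nat.findGreatest (fun i => (step^[i] p).1 = v) (m - 1)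
  have hτ_lt (v : V) : τ v < m := by
    obtain ⟨i, hi, -⟩ := hvisit v
    have : τ v ≤ m - 1 := Nat.findGreatest_le _
    omega
  have hτ_visit (v : V) : (step^[τ v] p).1 = v := by
    obtain ⟨i, hi, hiv⟩ := hvisit v
    exact Nat.findGreatest_spec (P := fun i => (step^[i] p).1 = v) (by omega) hiv
  have hτ_last {v : V} {i : ℕ} (hi : i < m) (hiv : (step^[i] p).1 = v) : i ≤ τ v :=
    Nat.le_findGreatest (by omega) hiv
  have hσ (v : V) : succMap tail head (step^[m] p).2 v = (step^[τ v + 1] p).1 := by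
    have hrotor : (step^[m] p).2.1 v = (step^[τ v + 1] p).2.1 v := by
      have := rotorStep_iterate_snd_of_forall_ne p (u := v) (a := τ v + 1) (d := m - (τ v + 1))
        fun j hj₁ hj₂ hjv => by have := hτ_last (by omega) hjv; omega
      rwa [Nat.add_sub_cancel' (hτ_lt v)] at this
    have hexit := succMap_rotorStep_self (head := head) (hnext := hnext) (step^[τ v] p)
    rw [hτ_visit v, ← iterate_succ_apply' step] at hexit
    rw [← hexit]
    exact congrArg head hrotor
  refine unicycle_iff.2 <| forall_exists_iterate_eq_of_lt_potential τ hτ_lt fun v hv => ?_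
  rw [hσ] at hv ⊢
  have : τ v + 1 ≠ m := fun h => hv (by rw [h])
  exact hτ_last (by have := hτ_lt v; omega) rfl

end Orbit

end Rotor

theorem recurrent_iff_unicycle_general
    {V E : Type} [Fintype V] [DecidableEq V] [Fintype E]
    (tail head : E → V) (next : E → E)
    (hnext : ∀ e, tail (next e) = tail e)
    (hcyc : ∀ e e' : E, tail e = tail e' → ∃ k, next^[k] e = e')
    (hsc : ∀ u v : V,
      Relation.ReflTransGen (fun a b => ∃ e, tail e = a ∧ head e = b) u v)
    (p : V × RotorConfig tail) :
    RecurrentState tail head next hnext p ↔ Unicycle tail head p := by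
  constructor
  · rintro ⟨n, hn, hpn⟩
    have hvisit (v : V) : ∃ i < n, ((rotorStep tail head next hnext)^[i] p).1 = v := by
      obtain ⟨m, hm⟩ := exists_visit_of_reflTransGen hcyc ⟨n, hn, hpn⟩ (hsc p.1 v)
      exact ⟨m % n, Nat.mod_lt m hn, by rw [IsPeriodicPt.iterate_mod_apply hpn, hm]⟩
    simpa only [hpn] using unicycle_iterate_of_forall_visit hvisit
  · intro hp
    exact (injOn_rotorStep (next_injective hnext hcyc)).mem_periodicPts
      (fun _ => Unicycle.rotorStep) hp

/-- **Recurrent states are exactly the unicycles.**  On a strongly connected digraph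
with a fixed cyclic ordering of the outgoing edges at each vertex, a
single-chip-and-rotor state is recurrent under the rotor-router operation if and only
if it is a unicycle. -/
theorem recurrent_iff_unicycle
    {V E : Type} [Fintype V] [DecidableEq V] [Fintype E] [DecidableEq E]
    (tail head : E → V) (next : E → E)
    (hnext : ∀ e, tail (next e) = tail e)
    (hcyc : ∀ e e' : E, tail e = tail e' → ∃ k, next^[k] e = e')
    (hsc : ∀ u v : V,
      Relation.ReflTransGen (fun a b => ∃ e, tail e = a ∧ head e = b) u v)
    (p : V × RotorConfig tail) :
    RecurrentState tail head next hnext p ↔ Unicycle tail head p :=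
  recurrent_iff_unicycle_general tail head next hnext hcyc hsc p
end

section
/- (Matrix-Tree Theorem) Let G be a digraph and v a vertex of G. The number of oriented spanning trees of G rooted at v equals the determinant of the reduced Laplacian Δ'(G) obtained by deleting from the Laplacian Δ(G) the row and column corresponding to v. -/
/-!
Expand each row of the reduced Laplacian, by multilinearity of the determinant, as the sum over
the edges `e` leaving `i` of the row `δ_i - δ_{head e}`. This writes `det Δ'` as a sum, over all
choices `ρ` of one outgoing edge at every `u ≠ v`, of `det (I - P_f)` for the successor map
`f = treeSucc head v ρ`. If every vertex flows into `v` under `f`, ordering vertices by their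
distance to `v` makes `I - P_f` unitriangular, so the term is `1`; otherwise the indicator of the
vertices that never reach `v` is an `f`-invariant kernel vector, so the term is `0`. Since `v` is
fixed by `f` and the vertex set is finite, every vertex reaches `v` exactly when `f` has no cycle
besides `v`, i.e. when `ρ` is an oriented spanning tree.
-/

/-- The out-degree of a vertex. -/
def outdeg {V E : Type} [Fintype E] [DecidableEq V] (tail : E → V) (v : V) : ℕ :=
  (Finset.univ.filter (fun e => tail e = v)).card

/-- The number of edges from `v` to `w`. -/
def numEdges {V E : Type} [Fintype E] [DecidableEq V] (tail head : E → V) (v w : V) : ℕ :=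
  (Finset.univ.filter (fun e => tail e = v ∧ head e = w)).card

/-- The reduced Laplacian: the Laplacian `Δ_{ij} = d_i·δ_{ij} − a_{ij}` with the row
and column corresponding to `v` deleted. -/
def reducedLaplacian {V E : Type} [Fintype E] [DecidableEq V] (tail head : E → V)
    (v : V) : Matrix {u : V // u ≠ v} {u : V // u ≠ v} ℤ :=
  fun i j => (if i = j then (outdeg tail i.1 : ℤ) else 0) - (numEdges tail head i.1 j.1 : ℤ)

/-- The successor map of a candidate spanning tree: every vertex other than the root
`v` follows its unique outgoing edge; the root is fixed. -/
def treeSucc {V E : Type} [DecidableEq V] (head : E → V) (v : V)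
    (ρ : {u : V // u ≠ v} → E) : V → V :=
  fun u => if h : u = v then u else head (ρ ⟨u, h⟩)

/-- An oriented spanning tree rooted at `v`: an acyclic subgraph in which every vertex
other than `v` has out-degree exactly one (given by `ρ`) and `v` has out-degree zero.
It is encoded by the choice `ρ` of one outgoing edge at each vertex `u ≠ v`, subject
to the edges `{ρ(u)}` containing no directed cycle. -/
def IsOrientedSpanningTree {V E : Type} [DecidableEq V] (tail head : E → V) (v : V)
    (ρ : {u : V // u ≠ v} → E) : Prop :=
  (∀ u, tail (ρ u) = u.1) ∧
  ∀ (u : {u : V // u ≠ v}) (k : ℕ), 0 < k → (treeSucc head v ρ)^[k] u.1 ≠ u.1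

open Finset Matrix Function

namespace Function

variable {α : Type*} {f : α → α} {v : α}

theorem exists_iterate_mem_periodicPts [Finite α] (f : α → α) (x : α) :
    ∃ n, f^[n] x ∈ periodicPts f := by
  obtain ⟨m, n, heq, hne⟩ : ∃ m n, f^[m] x = f^[n] x ∧ m ≠ n := by
    simpa [Injective] using not_injective_infinite_finite (f^[·] x)
  wlog hlt : m < n generalizing m n
  · exact this n m heq.symm hne.symm (by omega)
  refine ⟨m, mk_mem_periodicPts (Nat.sub_pos_of_lt hlt) ?_⟩
  rw [IsPeriodicPt, IsFixedPt, ← iterate_add_apply, Nat.sub_add_cancel hlt.le, heq]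

theorem forall_exists_iterate_eq_iff_periodicPts_subset [Finite α] (hv : IsFixedPt f v) :
    (∀ x, ∃ n, f^[n] x = v) ↔ periodicPts f ⊆ {v} := by
  constructor
  · rintro hreach x ⟨k, hk, hx⟩
    obtain ⟨n, hn⟩ := hreach x
    have hle : n ≤ k * n := Nat.le_mul_of_pos_left n hk
    calc x = f^[k * n] x := (hx.mul_const n).eq.symm
      _ = f^[k * n - n] (f^[n] x) := by rw [← iterate_add_apply, Nat.sub_add_cancel hle]
      _ = v := by rw [hn, (hv.iterate _).eq]
  · intro hsub x
    obtain ⟨n, hn⟩ := exists_iterate_mem_periodicPts f x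
    exact ⟨n, hsub hn⟩

theorem exists_iterate_apply_eq_iff_of_ne {x : α} (hx : x ≠ v) :
    (∃ n, f^[n] (f x) = v) ↔ ∃ n, f^[n] x = v := by
  simp [← Nat.or_exists_add_one (p := fun n => f^[n] x = v), hx]

theorem find_iterate_apply_eq_lt [DecidableEq α] (h : ∀ x, ∃ n, f^[n] x = v) {x : α}
    (hx : x ≠ v) : Nat.find (h (f x)) < Nat.find (h x) := by
  have hpos : 0 < Nat.find (h x) :=
    Nat.pos_of_ne_zero fun h0 => hx (by simpa [h0] using Nat.find_spec (h x))
  refine Nat.lt_of_le_pred hpos (Nat.find_min' _ ?_)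
  rw [← iterate_succ_apply, Nat.succ_pred_eq_of_pos hpos, Nat.find_spec (h x)]

end Function

namespace Matrix

variable {n ι R : Type*} [Fintype n] [DecidableEq n] [CommRing R]

theorem det_of_sum_rows (s : n → Finset ι) (g : n → ι → n → R) :
    det (of fun i => ∑ e ∈ s i, g i e) = ∑ ρ ∈ Fintype.piFinset s, det (of fun i => g i (ρ i)) :=
  (detRowAlternating (R := R) (n := n)).toMultilinearMap.map_sum_finset g s

theorem det_eq_one_of_lowerUnitriangular {α : Type*} [LinearOrder α] (M : Matrix n n R)
    (r : n → α) (hdiag : ∀ i, M i i = 1) (hlt : ∀ i j, i ≠ j → M i j ≠ 0 → r j < r i) :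
    M.det = 1 := by
  have hM : Mᵀ.BlockTriangular r := fun i j hji => by
    by_contra h
    exact (hlt j i (fun hij => (hij ▸ hji).false) h).not_gt hji
  have hblock : ∀ a, Mᵀ.toSquareBlock r a = 1 := fun a => by
    ext ⟨i, hi⟩ ⟨j, hj⟩
    by_cases hij : i = j
    · subst hij
      simp [toSquareBlock_def, hdiag]
    · have hji : M j i = 0 := by
        by_contra h
        exact (hlt j i (Ne.symm hij) h).ne (hi.trans hj.symm)
      simp [toSquareBlock_def, hji, hij]
  rw [← det_transpose, hM.det]
  exact prod_eq_one fun a _ => by rw [hblock a, det_one]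

end Matrix

section MapLaplacian

variable {V : Type*} [Fintype V] [DecidableEq V] (R : Type*) [CommRing R] (f : V → V) (v : V)

/-- The reduced Laplacian at `v` of the digraph with one edge `u → f u` out of each `u ≠ v`. -/
def mapLaplacian : Matrix {u // u ≠ v} {u // u ≠ v} R :=
  of fun i j => (if i = j then 1 else 0) - (if f i = j then 1 else 0)

variable {f v}

theorem det_mapLaplacian_of_forall_exists_iterate_eq (h : ∀ x, ∃ n, f^[n] x = v) :
    (mapLaplacian R f v).det = 1 := by
  have hlt : ∀ i j : {u // u ≠ v}, f i = j → Nat.find (h j) < Nat.find (h i) := fun i j hij =>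
    hij ▸ find_iterate_apply_eq_lt h i.2
  refine det_eq_one_of_lowerUnitriangular _ (fun i => Nat.find (h i)) (fun i => ?_)
    fun i j hij hM => hlt i j ?_
  · have : f i ≠ i := fun hi => (hlt i i hi).false
    simp [mapLaplacian, this]
  · by_contra h'
    exact hM (by simp [mapLaplacian, hij, h'])

theorem det_mapLaplacian_of_not_exists_iterate_eq {u : V} (hu : ¬∃ n, f^[n] u = v) :
    (mapLaplacian R f v).det = 0 := by
  classical
  set w : V → R := fun x => if ∃ n, f^[n] x = v then 0 else 1 with hw
  have hwv : w v = 0 := if_pos ⟨0, rfl⟩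
  have hwf : ∀ i : {u // u ≠ v}, w (f i) = w i := fun i => by
    simp only [hw, exists_iterate_apply_eq_iff_of_ne i.2]
  have hker : mapLaplacian R f v *ᵥ (w ∘ Subtype.val) = 0 := by
    funext i
    have hsum : ∑ j : {u // u ≠ v}, (if f i = j then w j else 0) = w (f i) := by
      rw [← sum_subtype (univ.erase v) (p := (· ≠ v)) (by simp) fun x => if f i = x then w x else 0,
        sum_erase univ (by simp [hwv]), sum_ite_eq, if_pos (mem_univ _)]
    simp only [mulVec, dotProduct, mapLaplacian, of_apply, sub_mul, sum_sub_distrib, ite_mul,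
      one_mul, zero_mul, sum_ite_eq, mem_univ, if_true, Function.comp_apply, hsum, hwf, sub_self,
      Pi.zero_apply]
  have hu' : u ≠ v := fun h => hu ⟨0, h⟩
  -- `adjugate M * M = det M • 1` turns the kernel vector `w` into `det M • w = 0`, and `w u = 1`.
  have := congrFun (congrArg (adjugate (mapLaplacian R f v) *ᵥ ·) hker) ⟨u, hu'⟩
  simpa [mulVec_mulVec, adjugate_mul, smul_mulVec, hw, hu] using this

open scoped Classical in
theorem det_mapLaplacian :
    (mapLaplacian R f v).det = if ∀ x, ∃ n, f^[n] x = v then 1 else 0 := by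
  split_ifs with h
  · exact det_mapLaplacian_of_forall_exists_iterate_eq R h
  · push Not at h
    obtain ⟨u, hu⟩ := h
    exact det_mapLaplacian_of_not_exists_iterate_eq R (not_exists.mpr hu)

end MapLaplacian

section OrientedSpanningTree

variable {V E : Type} [DecidableEq V] (tail head : E → V) (v : V)

theorem reducedLaplacian_eq_of_sum_rows [Fintype E] :
    reducedLaplacian tail head v = of fun i => ∑ e ∈ univ.filter (tail · = i.1),
      fun j => (if i = j then 1 else 0) - if head e = j.1 then 1 else 0 := by
  ext i j
  simp only [reducedLaplacian, outdeg, numEdges, of_apply, Finset.sum_apply, sum_sub_distrib,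
    sum_boole, filter_filter]
  split_ifs with hij <;> simp [hij]

theorem of_edgeRows_eq_mapLaplacian (ρ : {u : V // u ≠ v} → E) :
    (of fun i j => (if i = j then 1 else 0) - if head (ρ i) = j.1 then 1 else 0) =
      mapLaplacian ℤ (treeSucc head v ρ) v := by
  ext i j
  simp [mapLaplacian, treeSucc, i.2]

theorem isOrientedSpanningTree_iff [Finite V] (ρ : {u : V // u ≠ v} → E) :
    IsOrientedSpanningTree tail head v ρ ↔
      (∀ u, tail (ρ u) = u.1) ∧ ∀ x, ∃ n, (treeSucc head v ρ)^[n] x = v := by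
  have hv : IsFixedPt (treeSucc head v ρ) v := by simp [IsFixedPt, treeSucc]
  rw [IsOrientedSpanningTree, forall_exists_iterate_eq_iff_periodicPts_subset hv]
  refine and_congr_right' ⟨fun h x hx => ?_, fun h u k hk hu => u.2 (h ⟨k, hk, hu⟩)⟩
  by_contra hxv
  obtain ⟨k, hk, hkx⟩ := hx
  exact h ⟨x, hxv⟩ k hk hkx

end OrientedSpanningTree

theorem matrix_tree_theorem_general
    {V E : Type} [Fintype V] [DecidableEq V] [Fintype E]
    (tail head : E → V) (v : V) :
    (Nat.card {ρ : {u : V // u ≠ v} → E // IsOrientedSpanningTree tail head v ρ} : ℤ)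
      = (reducedLaplacian tail head v).det := by
  classical
  rw [reducedLaplacian_eq_of_sum_rows, det_of_sum_rows]
  simp_rw [of_edgeRows_eq_mapLaplacian, det_mapLaplacian]
  rw [sum_boole, Nat.card_eq_fintype_card, Fintype.card_subtype]
  congr 2
  ext ρ
  simp [isOrientedSpanningTree_iff]

/-- **Matrix-Tree Theorem.**  For a digraph `G` and a vertex `v`, the number of
oriented spanning trees of `G` rooted at `v` equals the determinant of the reduced
Laplacian obtained by deleting from the Laplacian the row and column of `v`. -/
theorem matrix_tree_theorem
    {V E : Type} [Fintype V] [DecidableEq V] [Fintype E] [DecidableEq E]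
    (tail head : E → V) (v : V) :
    (Nat.card {ρ : {u : V // u ≠ v} → E // IsOrientedSpanningTree tail head v ρ} : ℤ)
      = (reducedLaplacian tail head v).det :=
  matrix_tree_theorem_general tail head v
end
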